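/- arXiv:2210.03193 — 4 statements merged into one kernel-verified Lean document; each statement's English description precedes it below -/
import Mathlib

section
/- Let A be a commutative ring and let S be a multiplicative subset of A consisting of nonzerodivisors. If every prime ideal of the localization S⁻¹A is maximal, then S⁻¹A is the total ring of fractions of A; that is, the canonical map A → S⁻¹A exhibits S⁻¹A as the localization of A at the multiplicative set of all nonzerodivisors of A (equivalently, every nonzerodivisor of A becomes invertible in S⁻¹A). -/
open scoped nonZeroDivisors

/-- A non-unit lies in a maximal ideal, which in dimension zero is a minimal prime, and minimal
primes consist of zero divisors. -/
lemma Ring.KrullDimLE.isUnit_of_mem_nonZeroDivisors {R : Type*} [CommRing R]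
    [Ring.KrullDimLE 0 R] {x : R} (hx : x ∈ R⁰) : IsUnit x := by
  by_contra hx_nonunit
  obtain ⟨m, hm, hxm⟩ := exists_max_ideal_of_mem_nonunits hx_nonunit
  have : m.IsPrime := hm.isPrime
  exact notMem_nonZeroDivisors_of_mem_mem_minimalPrimes hxm
    m.mem_minimalPrimes_of_krullDimLE_zero hx

lemma IsLocalization.isFractionRing_of_krullDimLE_zero {A B : Type*} [CommRing A] [CommRing B]
    [Algebra A B] (S : Submonoid A) [IsLocalization S B] [Ring.KrullDimLE 0 B] (hS : S ≤ A⁰) :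
    IsFractionRing A B :=
  IsLocalization.of_le S A⁰ hS fun _ hr ↦
    Ring.KrullDimLE.isUnit_of_mem_nonZeroDivisors
      (IsLocalization.map_nonZeroDivisors_le S B ⟨_, hr, rfl⟩)

/-- If `S` is a multiplicative set of nonzerodivisors of `A` and every prime ideal of
`S⁻¹A` is maximal, then `S⁻¹A` is the total ring of fractions of `A`, i.e. the canonical
map `A → S⁻¹A` exhibits `S⁻¹A` as the localization of `A` at all nonzerodivisors. -/
theorem stmt0 {A : Type*} [CommRing A] (S : Submonoid A) (hS : S ≤ nonZeroDivisors A)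
    (h : ∀ p : Ideal (Localization S), p.IsPrime → p.IsMaximal) :
    IsFractionRing A (Localization S) :=
  have : Ring.KrullDimLE 0 (Localization S) := Ring.krullDimLE_zero_iff.mpr h
  IsLocalization.isFractionRing_of_krullDimLE_zero S hS
end

section
/- Let X be a set and let A_x (x ∈ X) be a family of reduced commutative rings, each having only finitely many minimal prime ideals, with total rings of fractions K_x. Then K := ∏_{x∈X} K_x is the total ring of fractions of A := ∏_{x∈X} A_x (i.e., the canonical map A → K exhibits K as the localization of A at its multiplicative set of nonzerodivisors), and every prime ideal of K is maximal. -/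
/-!
Nonzerodivisors of a product are the families of nonzerodivisors, so the product of the
localizations is the localization of the product. Dimension zero is not preserved by infinite
products, but von Neumann regularity (every `a` has a `b` with `a * b * a = a`) is, and it forces
every prime to be maximal. The total ring of fractions of a reduced ring `A` with finitely many
minimal primes is von Neumann regular: by prime avoidance, for `x : A` there is a `z` lying in
exactly those minimal primes that do not contain `x`. Then `x * z = 0` because `A` is reduced,
`x + z` lies in no minimal prime and is therefore a nonzerodivisor, and `b = s / (x + z)` works
for `a = x / s`.
-/

open scoped nonZeroDivisors

def IsVonNeumannRegular (R : Type*) [Mul R] : Prop :=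
  ∀ a : R, ∃ b, a * b * a = a

namespace IsVonNeumannRegular

theorem pi {ι : Type*} {R : ι → Type*} [∀ i, Mul (R i)] (h : ∀ i, IsVonNeumannRegular (R i)) :
    IsVonNeumannRegular (∀ i, R i) := fun a ↦ by
  choose b hb using fun i ↦ h i (a i)
  exact ⟨b, funext hb⟩

theorem of_surjective {R S : Type*} [Mul R] [Mul S] (h : IsVonNeumannRegular R) (f : R →ₙ* S)
    (hf : Function.Surjective f) : IsVonNeumannRegular S := by
  intro a
  obtain ⟨a, rfl⟩ := hf a
  obtain ⟨b, hb⟩ := h a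
  exact ⟨f b, by rw [← map_mul, ← map_mul, hb]⟩

theorem isField {R : Type*} [CommRing R] [IsDomain R] (h : IsVonNeumannRegular R) :
    IsField R where
  exists_pair_ne := exists_pair_ne R
  mul_comm := mul_comm
  mul_inv_cancel {a} ha := by
    obtain ⟨b, hb⟩ := h a
    refine ⟨b, mul_left_cancel₀ ha ?_⟩
    rw [mul_one, ← mul_assoc, mul_right_comm, hb]

theorem krullDimLE_zero {R : Type*} [CommRing R] (h : IsVonNeumannRegular R) :
    Ring.KrullDimLE 0 R :=
  .mk₀ fun p _ ↦ Ideal.Quotient.maximal_of_isField p <|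
    (h.of_surjective (Ideal.Quotient.mk p).toNonUnitalRingHom Ideal.Quotient.mk_surjective).isField

end IsVonNeumannRegular

section MinimalPrimes

variable {R : Type*} [CommRing R]

theorem exists_forall_mem_minimalPrimes_iff_notMem (hmin : (minimalPrimes R).Finite) (x : R) :
    ∃ z, ∀ p ∈ minimalPrimes R, z ∈ p ↔ x ∉ p := by
  classical
  set T := (hmin.subset (Set.sep_subset (minimalPrimes R) (x ∉ ·))).toFinset
  have hT : ∀ {q}, q ∈ T ↔ q ∈ minimalPrimes R ∧ x ∉ q := by simp [T]
  have hcover : ¬ ((T.inf id : Ideal R) : Set R) ⊆ ⋃ p ∈ {p ∈ minimalPrimes R | x ∈ p}, p := by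
    rw [Ideal.subset_union_prime_finite (hmin.subset (Set.sep_subset _ _)) ⊥ ⊥
      fun p hp _ _ ↦ Ideal.IsMinimalPrime.isPrime hp.1]
    rintro ⟨p, ⟨hp, hxp⟩, hle⟩
    obtain ⟨q, hq, hqp⟩ := ((Ideal.IsMinimalPrime.isPrime hp).inf_le').1 hle
    rw [minimalPrimes_eq_minimals] at hp
    exact (hT.1 hq).2 (hp.eq_of_le (Ideal.IsMinimalPrime.isPrime (hT.1 hq).1) hqp ▸ hxp)
  simp only [Set.not_subset, Set.mem_iUnion, not_exists] at hcover
  obtain ⟨z, hzT, hzS⟩ := hcover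
  exact ⟨z, fun p hp ↦ ⟨fun hzp hxp ↦ hzS p ⟨hp, hxp⟩ hzp,
    fun hxp ↦ Submodule.mem_finsetInf.1 hzT p (hT.2 ⟨hp, hxp⟩)⟩⟩

variable [IsReduced R]

theorem eq_zero_of_forall_mem_minimalPrimes {x : R} (h : ∀ p ∈ minimalPrimes R, x ∈ p) :
    x = 0 := by
  have hx : x ∈ nilradical R := by
    rw [nilradical, Ideal.zero_eq_bot, ← Ideal.sInf_minimalPrimes]
    exact Submodule.mem_sInf.2 h
  simpa [nilradical_eq_zero] using hx

theorem mem_nonZeroDivisors_of_forall_notMem_minimalPrimes {x : R}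
    (h : ∀ p ∈ minimalPrimes R, x ∉ p) : x ∈ R⁰ :=
  mem_nonZeroDivisors_iff_right.2 fun _ hy ↦ eq_zero_of_forall_mem_minimalPrimes fun p hp ↦
    ((Ideal.IsMinimalPrime.isPrime hp).mem_or_mem (hy ▸ p.zero_mem)).resolve_right (h p hp)

theorem exists_mul_eq_zero_add_mem_nonZeroDivisors (hmin : (minimalPrimes R).Finite) (x : R) :
    ∃ z, x * z = 0 ∧ x + z ∈ R⁰ := by
  obtain ⟨z, hz⟩ := exists_forall_mem_minimalPrimes_iff_notMem hmin x
  refine ⟨z, eq_zero_of_forall_mem_minimalPrimes fun p hp ↦ ?_,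
    mem_nonZeroDivisors_of_forall_notMem_minimalPrimes fun p hp hxz ↦ ?_⟩
  · by_cases hxp : x ∈ p
    · exact p.mul_mem_right z hxp
    · exact p.mul_mem_left x ((hz p hp).2 hxp)
  · by_cases hxp : x ∈ p
    · exact (hz p hp).1 ((p.add_mem_iff_right hxp).1 hxz) hxp
    · exact hxp ((p.add_mem_iff_left ((hz p hp).2 hxp)).1 hxz)

theorem IsFractionRing.isVonNeumannRegular_of_finite_minimalPrimes (K : Type*) [CommRing K]
    [Algebra R K] [IsFractionRing R K] (hmin : (minimalPrimes R).Finite) :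
    IsVonNeumannRegular K := by
  intro a
  obtain ⟨⟨x, s⟩, rfl⟩ := IsLocalization.mk'_surjective R⁰ a
  obtain ⟨z, hxz, hu⟩ := exists_mul_eq_zero_add_mem_nonZeroDivisors hmin x
  refine ⟨IsLocalization.mk' K (s : R) ⟨x + z, hu⟩, ?_⟩
  rw [← IsLocalization.mk'_mul, ← IsLocalization.mk'_mul, IsLocalization.mk'_eq_iff_eq]
  congr 1
  push_cast
  linear_combination (-((s : R) * (s : R))) * hxz

end MinimalPrimes

theorem Pi.nonZeroDivisors_eq_pi {ι : Type*} (R : ι → Type*) [∀ i, Ring (R i)] :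
    (∀ i, R i)⁰ = .pi .univ fun i ↦ (R i)⁰ := by
  ext a
  simp [← isRegular_iff_mem_nonZeroDivisors, Pi.isRegular_iff, Submonoid.mem_pi]

/-- Let `A x (x : X)` be a family of reduced commutative rings, each with finitely many
minimal primes, and with total rings of fractions `K x`.  Then `∏ x, K x` is the total
ring of fractions of `∏ x, A x` (via the product of the localization maps), and every
prime ideal of `∏ x, K x` is maximal. -/
theorem stmt1 {X : Type*} (A : X → Type*) (K : X → Type*)
    [∀ x, CommRing (A x)] [∀ x, CommRing (K x)]
    [∀ x, IsReduced (A x)] [∀ x, Algebra (A x) (K x)]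
    [∀ x, IsFractionRing (A x) (K x)]
    (hmin : ∀ x, (minimalPrimes (A x)).Finite) :
    letI : Algebra (∀ x, A x) (∀ x, K x) :=
      (Pi.ringHom fun x => (algebraMap (A x) (K x)).comp (Pi.evalRingHom A x)).toAlgebra
    IsFractionRing (∀ x, A x) (∀ x, K x) ∧
      ∀ p : Ideal (∀ x, K x), p.IsPrime → p.IsMaximal := by
  refine ⟨?_, fun p hp ↦ ?_⟩
  · have : IsLocalization (.pi .univ fun x ↦ (A x)⁰) (∀ x, K x) := inferInstance
    rw [← Pi.nonZeroDivisors_eq_pi] at this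
    -- the statement's algebra structure agrees with the `Pi` one only up to `algebraMap`
    convert this using 1
    exact Algebra.algebra_ext _ _ fun _ ↦ rfl
  · have := (IsVonNeumannRegular.pi fun x ↦
      IsFractionRing.isVonNeumannRegular_of_finite_minimalPrimes (K x) (hmin x)).krullDimLE_zero
    exact hp.isMaximal'
end

section
/- Let A → B be a map of commutative rings and let f : X → Spec(A) be an M-morphism. Assume that every nonzerodivisor of A_red is mapped to a nonzerodivisor of B_red under the induced map A_red → B_red. Then the base change f_B : X ×_{Spec(A)} Spec(B) → Spec(B) is an M-morphism. -/
/-!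
Properness and finite presentation are stable under base change. Since `A_red → B_red` preserves
nonzerodivisors, it extends to a map `K_A → K_B` of total fraction rings, so `Spec K_B → Spec A`
factors through `Spec K_A`. Hence `X_{K_B}` is a base change of `X_{K_A} ≅ Spec K_A`, and therefore
isomorphic to `Spec K_B`.
-/

open AlgebraicGeometry CategoryTheory CategoryTheory.Limits

universe u

/-- The canonical map from `A` to the total ring of fractions of `A_red`. -/
noncomputable def totalFractionMap (A : Type u) [CommRing A] :
    CommRingCat.of A ⟶ CommRingCat.of (FractionRing (A ⧸ nilradical A)) :=
  CommRingCat.ofHom ((algebraMap (A ⧸ nilradical A) (FractionRing (A ⧸ nilradical A))).comp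
    (Ideal.Quotient.mk (nilradical A)))

/-- `f : X ⟶ Spec A` is an M-morphism if it is proper, of finite presentation, and its
base change to the total fraction ring of `A_red` is an isomorphism. -/
def IsMMorphism {A : Type u} [CommRing A] {X : Scheme.{u}}
    (f : X ⟶ Spec (CommRingCat.of A)) : Prop :=
  IsProper f ∧ LocallyOfFinitePresentation f ∧
    IsIso (pullback.snd f (Spec.map (totalFractionMap A)))

theorem CategoryTheory.Limits.isIso_pullback_snd_pullback_snd_of_comm {C : Type*} [Category C]
    [HasPullbacks C] {X Y Z Y' Z' : C} (f : X ⟶ Z) (g : Y ⟶ Z) {t : Z' ⟶ Z} {t' : Y' ⟶ Y}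
    (ψ : Y' ⟶ Z') (w : t' ≫ g = ψ ≫ t) [IsIso (pullback.snd f t)] :
    IsIso (pullback.snd (pullback.snd f g) t') := by
  -- `h` is a variable so that `w` can be substituted despite the dependent `HasPullback` instance
  have (h : Y' ⟶ Z) (e : h = ψ ≫ t) : IsIso (pullback.snd f h) := by
    subst e
    rw [← pullbackLeftPullbackSndIso_inv_snd_snd]
    infer_instance
  have := this _ w
  rw [← pullbackLeftPullbackSndIso_hom_snd]
  infer_instance

section

variable {A B : Type u} [CommRing A] [CommRing B] (φ : A →+* B)

lemma nilradical_le_comap_nilradical : nilradical A ≤ (nilradical B).comap φ :=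
  fun _ ha => mem_nilradical.mpr ((mem_nilradical.mp ha).map φ)

lemma exists_totalFractionMap_comp_eq
    (hφ : ∀ a : A,
      Ideal.Quotient.mk (nilradical A) a ∈ nonZeroDivisors (A ⧸ nilradical A) →
      Ideal.Quotient.mk (nilradical B) (φ a) ∈ nonZeroDivisors (B ⧸ nilradical B)) :
    ∃ ψ : FractionRing (A ⧸ nilradical A) →+* FractionRing (B ⧸ nilradical B),
      totalFractionMap A ≫ CommRingCat.ofHom ψ = CommRingCat.ofHom φ ≫ totalFractionMap B := by
  let φred := Ideal.quotientMap (nilradical B) φ (nilradical_le_comap_nilradical φ)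
  have hφred : nonZeroDivisors (A ⧸ nilradical A) ≤
      (nonZeroDivisors (B ⧸ nilradical B)).comap φred := by
    intro x hx
    obtain ⟨a, rfl⟩ := Ideal.Quotient.mk_surjective x
    exact hφ a hx
  refine ⟨IsLocalization.map _ φred hφred, ?_⟩
  ext a
  simp [totalFractionMap, φred]

end

/-- Base change of an M-morphism along a ring map `A → B` sending nonzerodivisors of
`A_red` to nonzerodivisors of `B_red` is an M-morphism. -/
theorem stmt2 {A B : Type u} [CommRing A] [CommRing B] (φ : A →+* B)
    (hφ : ∀ a : A,
      Ideal.Quotient.mk (nilradical A) a ∈ nonZeroDivisors (A ⧸ nilradical A) →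
      Ideal.Quotient.mk (nilradical B) (φ a) ∈ nonZeroDivisors (B ⧸ nilradical B))
    {X : Scheme.{u}} (f : X ⟶ Spec (CommRingCat.of A)) (hf : IsMMorphism f) :
    IsMMorphism (pullback.snd f (Spec.map (CommRingCat.ofHom φ))) := by
  obtain ⟨hproper, hfp, hiso⟩ := hf
  obtain ⟨ψ, hψ⟩ := exists_totalFractionMap_comp_eq φ hφ
  refine ⟨inferInstance, inferInstance,
    isIso_pullback_snd_pullback_snd_of_comm (t := Spec.map (totalFractionMap A)) f _
      (Spec.map (CommRingCat.ofHom ψ)) ?_⟩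
  rw [← Spec.map_comp, ← Spec.map_comp, hψ]
end

section
/- Let A be a local integral domain and let X be an index set. Let 𝔐 be a maximal ideal of the product ring A^X = ∏_{x∈X} A. Then the localization (A^X)_𝔐 of A^X at 𝔐 is an integral domain. -/
/-! If `f * g = 0` in `X → A`, the indicator `e` of the zero set of `f` kills `f` and `1 - e`
kills `g` (as `A` has no zero divisors). One of `e`, `1 - e` avoids the prime `𝔐`, so `f` or `g`
already vanishes in the localization at `𝔐`. -/

theorem IsLocalization.AtPrime.noZeroDivisors {R S : Type*} [CommRing R] [CommRing S]
    [Algebra R S] (P : Ideal R) [P.IsPrime] [IsLocalization.AtPrime S P]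
    (h : ∀ f g : R, f * g = 0 → ∃ e ∉ P, e * f = 0 ∨ e * g = 0) :
    NoZeroDivisors S where
  eq_zero_or_eq_zero_of_mul_eq_zero {x y} hxy := by
    obtain ⟨⟨f, s⟩, rfl⟩ := IsLocalization.mk'_surjective P.primeCompl x
    obtain ⟨⟨g, t⟩, rfl⟩ := IsLocalization.mk'_surjective P.primeCompl y
    rw [← IsLocalization.mk'_mul, IsLocalization.mk'_eq_zero_iff] at hxy
    obtain ⟨c, hc⟩ := hxy
    obtain ⟨e, he, hf | hg⟩ := h (c * f) g (by rw [mul_assoc, hc])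
    · left
      rw [IsLocalization.mk'_eq_zero_iff]
      exact ⟨⟨e, he⟩ * c, by rw [Submonoid.coe_mul, mul_assoc, hf]⟩
    · right
      rw [IsLocalization.mk'_eq_zero_iff]
      exact ⟨⟨e, he⟩, hg⟩

theorem Pi.exists_notMem_mul_eq_zero_or_mul_eq_zero {A : Type*} [CommRing A] [NoZeroDivisors A]
    {X : Type*} (P : Ideal (X → A)) [P.IsPrime] {f g : X → A} (hfg : f * g = 0) :
    ∃ e ∉ P, e * f = 0 ∨ e * g = 0 := by
  classical
  let e : X → A := fun x => if f x = 0 then 1 else 0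
  have hef : e * f = 0 := funext fun x => by by_cases hx : f x = 0 <;> simp [e, hx]
  have heg : (1 - e) * g = 0 := funext fun x => by
    by_cases hx : f x = 0
    · simp [e, hx]
    · simp [e, hx, (mul_eq_zero.mp (congrFun hfg x)).resolve_left hx]
  by_cases he : e ∈ P
  · refine ⟨1 - e, fun he' => ‹P.IsPrime›.one_notMem ?_, Or.inr heg⟩
    simpa using P.add_mem he he'
  · exact ⟨e, he, Or.inl hef⟩

theorem stmt10_general {A : Type*} [CommRing A] [IsDomain A] (X : Type*)
    (𝔐 : Ideal (X → A)) [𝔐.IsMaximal] :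
    IsDomain (Localization.AtPrime 𝔐) :=
  have := IsLocalization.AtPrime.noZeroDivisors (S := Localization.AtPrime 𝔐) 𝔐
    fun _ _ => Pi.exists_notMem_mul_eq_zero_or_mul_eq_zero 𝔐
  NoZeroDivisors.to_isDomain _

/-- An ultrapower of a local integral domain is an integral domain: if `A` is a local
domain, `X` an index set, and `𝔐` a maximal ideal of `∏ x : X, A`, then the localization
of `∏ x : X, A` at `𝔐` is an integral domain. -/
theorem stmt10 {A : Type*} [CommRing A] [IsLocalRing A] [IsDomain A] (X : Type*)
    (𝔐 : Ideal (X → A)) [𝔐.IsMaximal] :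
    IsDomain (Localization.AtPrime 𝔐) :=
  stmt10_general X 𝔐
end
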